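/- With m(y*) = (1/π) erf(y*/√2)/y*, one has d/dy* log m(y*) = √(2/π) e^{−y*²/2}/erf(y*/√2) − 1/y*, and this tends to 0 as |y*| → ∞. Consequently, by Tweedie's formula, E(b | y*) − y* → 0 as |y*| → ∞ (bounded influence of the prior). -/

import Mathlib

open MeasureTheory Real Set Filter

/-!
Since `erf` is odd and tends to `1` at `+∞`, `|erf (y / √2)| → 1` as `|y| → ∞`, so the Gaussian
term `√(2/π) e^{-y²/2} / erf (y/√2)` of the score vanishes at infinity, and so does `1 / y`.
The score formula itself is the log-derivative of `c · g(y) / y` with `g(y) = erf (y / √2)`,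
whose derivative is `√(2/π) e^{-y²/2}`.
-/

noncomputable def erf (x : ℝ) : ℝ :=
  (2 / Real.sqrt π) * ∫ t in (0:ℝ)..x, exp (-t ^ 2)

lemma continuous_exp_neg_sq : Continuous fun t : ℝ => exp (-t ^ 2) := by fun_prop

lemma hasDerivAt_erf (x : ℝ) : HasDerivAt erf (2 / √π * exp (-x ^ 2)) x :=
  (intervalIntegral.integral_hasDerivAt_right (continuous_exp_neg_sq.intervalIntegrable _ _)
    (continuous_exp_neg_sq.stronglyMeasurableAtFilter _ _)
    continuous_exp_neg_sq.continuousAt).const_mul _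

lemma erf_neg (x : ℝ) : erf (-x) = -erf x := by
  have h := intervalIntegral.integral_comp_neg (a := 0) (b := x) fun t : ℝ ↦ exp (-t ^ 2)
  simp only [neg_sq, neg_zero] at h
  rw [erf, erf, intervalIntegral.integral_symm, ← h, mul_neg]

lemma erf_pos {x : ℝ} (hx : 0 < x) : 0 < erf x :=
  mul_pos (by positivity) <| intervalIntegral.intervalIntegral_pos_of_pos
    (continuous_exp_neg_sq.intervalIntegrable _ _) (fun _ ↦ exp_pos _) hx

lemma erf_nonneg {x : ℝ} (hx : 0 ≤ x) : 0 ≤ erf x :=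
  mul_nonneg (by positivity) <| intervalIntegral.integral_nonneg hx fun _ _ ↦ (exp_pos _).le

lemma abs_erf (x : ℝ) : |erf x| = erf |x| := by
  rcases le_total 0 x with hx | hx
  · rw [abs_of_nonneg hx, abs_of_nonneg (erf_nonneg hx)]
  · have := erf_nonneg (neg_nonneg.2 hx)
    rw [erf_neg] at this
    rw [abs_of_nonpos hx, abs_of_nonpos (neg_nonneg.1 this), erf_neg]

lemma erf_ne_zero {x : ℝ} (hx : x ≠ 0) : erf x ≠ 0 := by
  rw [← abs_ne_zero, abs_erf]
  exact (erf_pos (abs_pos.2 hx)).ne'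

lemma tendsto_erf_atTop : Tendsto erf atTop (nhds 1) := by
  have hint : IntegrableOn (fun t : ℝ ↦ exp (-t ^ 2)) (Ioi 0) := by
    simpa using integrableOn_Ioi_exp_neg_mul_sq_iff.2 one_pos
  have hval : ∫ t in Ioi (0:ℝ), exp (-t ^ 2) = √π / 2 := by
    simpa using integral_gaussian_Ioi 1
  have h := (intervalIntegral_tendsto_integral_Ioi 0 hint tendsto_id).const_mul (2 / √π)
  have hone : 2 / √π * (√π / 2) = 1 := by field_simp
  rwa [hval, hone] at h

lemma hasDerivAt_erf_div_sqrt_two (y : ℝ) :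
    HasDerivAt (fun t ↦ erf (t / √2)) (√(2 / π) * exp (-y ^ 2 / 2)) y := by
  refine ((hasDerivAt_erf (y / √2)).comp y ((hasDerivAt_id y).div_const √2)).congr_deriv ?_
  rw [div_pow, sq_sqrt zero_le_two, sqrt_div zero_le_two, neg_div]
  field_simp
  rw [sq_sqrt zero_le_two]

lemma HasDerivAt.log_const_mul_div_id {g : ℝ → ℝ} {g' c y : ℝ} (hg : HasDerivAt g g' y)
    (hc : c ≠ 0) (hgy : g y ≠ 0) (hy : y ≠ 0) :
    HasDerivAt (fun t ↦ Real.log (c * g t / t)) (g' / g y - 1 / y) y := by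
  refine (((hg.const_mul c).div (hasDerivAt_id y) hy).log (by simp [*])).congr_deriv ?_
  simp only [Pi.div_apply, id]
  field_simp

lemma deriv_log_horseshoe_marginal {y : ℝ} (hy : y ≠ 0) :
    deriv (fun t ↦ log ((1 / π) * erf (t / √2) / t)) y
      = √(2 / π) * exp (-y ^ 2 / 2) / erf (y / √2) - 1 / y :=
  ((hasDerivAt_erf_div_sqrt_two y).log_const_mul_div_id (by positivity)
    (erf_ne_zero (div_ne_zero hy (by positivity))) hy).deriv

lemma tendsto_exp_neg_sq_div_two_cocompact :
    Tendsto (fun y : ℝ ↦ exp (-y ^ 2 / 2)) (cocompact ℝ) (nhds 0) := by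
  have h : Tendsto (fun y : ℝ ↦ ‖y‖ ^ 2 / 2) (cocompact ℝ) atTop :=
    ((tendsto_pow_atTop two_ne_zero).comp tendsto_norm_cocompact_atTop).atTop_div_const two_pos
  refine (tendsto_exp_neg_atTop_nhds_zero.comp h).congr fun y ↦ ?_
  simp [neg_div]

lemma tendsto_one_div_cocompact {𝕜 : Type*} [NormedDivisionRing 𝕜] [ProperSpace 𝕜] :
    Tendsto (fun y : 𝕜 ↦ 1 / y) (cocompact 𝕜) (nhds 0) := by
  simpa [← Metric.cobounded_eq_cocompact] using tendsto_inv₀_cobounded (α := 𝕜)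

lemma tendsto_gaussian_div_erf_cocompact :
    Tendsto (fun y ↦ √(2 / π) * exp (-y ^ 2 / 2) / erf (y / √2)) (cocompact ℝ) (nhds 0) := by
  rw [tendsto_zero_iff_abs_tendsto_zero]
  have hden : Tendsto (fun y : ℝ ↦ |erf (y / √2)|) (cocompact ℝ) (nhds 1) := by
    simp_rw [abs_erf, abs_div, abs_of_pos (sqrt_pos.2 zero_lt_two)]
    exact tendsto_erf_atTop.comp <|
      tendsto_norm_cocompact_atTop.atTop_div_const (sqrt_pos.2 zero_lt_two)
  convert ((tendsto_exp_neg_sq_div_two_cocompact.const_mul √(2 / π)).div hden one_ne_zero) using 1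
  · ext y
    simp only [Function.comp, Pi.div_apply, abs_div, abs_mul, abs_of_nonneg (sqrt_nonneg _),
      abs_of_pos (exp_pos _)]
  · simp

lemma tendsto_deriv_log_horseshoe_marginal_cocompact :
    Tendsto (fun y ↦ deriv (fun t ↦ log ((1 / π) * erf (t / √2) / t)) y) (cocompact ℝ)
      (nhds 0) := by
  refine (sub_zero (0 : ℝ) ▸
    tendsto_gaussian_div_erf_cocompact.sub tendsto_one_div_cocompact).congr' ?_
  filter_upwards [isCompact_singleton.compl_mem_cocompact] with y hy
  exact (deriv_log_horseshoe_marginal hy).symm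

/-- with m(y*) = (1/π) erf(y*/√2)/y*, one has
d/dy* log m(y*) = √(2/π) e^{−y*²/2}/erf(y*/√2) − 1/y*, this tends to 0 as |y*| → ∞, and
consequently (via Tweedie's formula E(b|y*) = y* + (log m)'(y*)) the posterior mean
satisfies E(b | y*) − y* → 0 as |y*| → ∞ (bounded influence). -/
theorem horseshoe_bounded_influence :
    (∀ y : ℝ, y ≠ 0 →
      deriv (fun t => Real.log ((1 / π) * erf (t / Real.sqrt 2) / t)) y
        = Real.sqrt (2 / π) * exp (-y ^ 2 / 2) / erf (y / Real.sqrt 2) - 1 / y) ∧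
    Tendsto (fun y : ℝ =>
        deriv (fun t => Real.log ((1 / π) * erf (t / Real.sqrt 2) / t)) y)
      (cocompact ℝ) (nhds 0) ∧
    Tendsto (fun y : ℝ =>
        (y + deriv (fun t => Real.log ((1 / π) * erf (t / Real.sqrt 2) / t)) y) - y)
      (cocompact ℝ) (nhds 0) := by
  refine ⟨fun y hy ↦ deriv_log_horseshoe_marginal hy,
    tendsto_deriv_log_horseshoe_marginal_cocompact, ?_⟩
  simpa only [add_sub_cancel_left] using tendsto_deriv_log_horseshoe_marginal_cocompact
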